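/- Fix a design matrix Ψ ∈ ℝ^{N×K}, a partition of the K coordinates into S groups with blocks γ_g of sizes d_g, weights c_g > 0, ν ∈ (0,1), λ₁ ≥ 0, λ₂ ≥ 0, and a symmetric positive semidefinite R ∈ ℝ^{K×K}; for y ∈ ℝ^N define L_y(γ) = ‖y − Ψγ‖₂² + λ₁ Σ_{g=1}^S c_g ‖γ_g‖₁^ν + λ₂ γᵀRγ. Assume the smallest eigenvalue ρ_min of M = ΨᵀΨ + λ₂R is strictly positive. Suppose y = Ψγ* + ε where γ* ∈ ℝ^K is fixed and ε : Ω → ℝ^N is a random vector on a probability space with independent, square-integrable coordinates of mean zero and variance σ² < ∞. Let γ̂ : Ω → ℝ^K be a measurable map such that almost surely γ̂(ω) minimizes L_{y(ω)} over ℝ^K, let b(ω) = M⁻¹Ψᵀy(ω) be the ridge estimator, and suppose there is a constant η < ∞ with ( Σ_{g=1}^S d_g c_g² ‖b_g(ω)‖₁^{2(ν−1)} )^{1/2} ≤ η and b_g(ω) ≠ 0 for all g, almost surely. Then E‖γ̂ − γ*‖₂² ≤ ( 8 λ₁² η² + 4 λ₂² ‖Rγ*‖₂² + 4 σ² ‖Ψ‖_F²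 ) / ρ_min². -/

import Mathlib

/-!
Completing the square, `L_y(γ) = (γ - b)ᵀ M (γ - b) + λ₁ pen(γ) + const` with `pen` the group
bridge penalty `Σ_g c_g ‖γ_g‖₁ ^ ν`, so comparing the minimizer `γ̂` with the competitor `b` gives
`ρ_min ‖γ̂ - b‖² ≤ λ₁ (pen b - pen γ̂)`. The concavity bound `B ^ ν - A ^ ν ≤ B ^ (ν - 1) |B - A|`
at `B = ‖b_g‖₁ > 0`, followed by Cauchy–Schwarz inside each group and then across groups, bounds
`pen b - pen γ̂` by `η ‖γ̂ - b‖`; hence `‖γ̂ - b‖ ≤ λ₁ η / ρ_min`. The ridge error solves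
`M (b - γ*) = Ψᵀε - λ₂ R γ*`, so `‖b - γ*‖ ≤ ‖Ψᵀε - λ₂ R γ*‖ / ρ_min`, and
`E ‖Ψᵀε‖² = σ² ‖Ψ‖_F²` since the variance of a sum of independent variables is the sum of the
variances. The two errors are combined through `‖u + v‖² ≤ 2 ‖u‖² + 2 ‖v‖²`.
-/

open Matrix MeasureTheory ProbabilityTheory

namespace Real

lemma rpow_sub_rpow_le_rpow_sub_one_mul_abs {A B ν : ℝ} (hA : 0 ≤ A) (hB : 0 < B)
    (hν₀ : 0 ≤ ν) (hν₁ : ν ≤ 1) : B ^ ν - A ^ ν ≤ B ^ (ν - 1) * |B - A| := by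
  have rpow_sub_one_mul_self {x : ℝ} (hx : 0 < x) : x ^ (ν - 1) * x = x ^ ν := by
    rw [rpow_sub_one hx.ne', div_mul_cancel₀ _ hx.ne']
  rcases le_or_gt B A with hBA | hAB
  · have : B ^ ν ≤ A ^ ν := rpow_le_rpow hB.le hBA hν₀
    have : 0 ≤ B ^ (ν - 1) * |B - A| := by positivity
    linarith
  · rw [abs_of_pos (sub_pos.mpr hAB), mul_sub, rpow_sub_one_mul_self hB, sub_le_sub_iff_left]
    rcases hA.eq_or_lt with rfl | hA
    · rw [mul_zero]; positivity
    · calc B ^ (ν - 1) * A ≤ A ^ (ν - 1) * A := by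
            gcongr ?_ * A
            exact rpow_le_rpow_of_nonpos hA hAB.le (by linarith)
        _ = A ^ ν := rpow_sub_one_mul_self hA

end Real

lemma sq_le_div_sq_of_mul_sq_le_mul {ρ a t : ℝ} (hρ : 0 < ρ) (ht : 0 ≤ t)
    (h : ρ * t ^ 2 ≤ a * t) : t ^ 2 ≤ a ^ 2 / ρ ^ 2 := by
  rcases ht.eq_or_lt with rfl | ht
  · rw [zero_pow two_ne_zero]; positivity
  · have : ρ * t ≤ a := le_of_mul_le_mul_right (by nlinarith) ht
    rw [← div_pow]
    exact pow_le_pow_left₀ ht.le ((le_div_iff₀' hρ).mpr this) 2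

section DotProduct

variable {n : Type*} [Fintype n]

lemma dotProduct_self_nonneg (x : n → ℝ) : 0 ≤ x ⬝ᵥ x :=
  Finset.sum_nonneg fun i _ => mul_self_nonneg (x i)

lemma dotProduct_self_eq_sum_sq (x : n → ℝ) : x ⬝ᵥ x = ∑ i, x i ^ 2 := by
  simp only [dotProduct, sq]

lemma dotProduct_le_sqrt_mul_sqrt (x y : n → ℝ) : x ⬝ᵥ y ≤ √(x ⬝ᵥ x) * √(y ⬝ᵥ y) := by
  rw [dotProduct_self_eq_sum_sq, dotProduct_self_eq_sum_sq]
  exact Real.sum_mul_le_sqrt_mul_sqrt Finset.univ x y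

lemma add_dotProduct_self_add_le (x y : n → ℝ) :
    (x + y) ⬝ᵥ (x + y) ≤ 2 * (x ⬝ᵥ x) + 2 * (y ⬝ᵥ y) := by
  simp only [dotProduct_self_eq_sum_sq, Finset.mul_sum, ← Finset.sum_add_distrib, Pi.add_apply]
  exact Finset.sum_le_sum fun i _ => by nlinarith [sq_nonneg (x i - y i)]

lemma dotProduct_self_le_div_sq_of_mul_le {ρ a : ℝ} (hρ : 0 < ρ) {x : n → ℝ}
    (h : ρ * (x ⬝ᵥ x) ≤ a * √(x ⬝ᵥ x)) : x ⬝ᵥ x ≤ a ^ 2 / ρ ^ 2 := by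
  have hx := Real.sq_sqrt (dotProduct_self_nonneg x)
  rw [← hx]
  exact sq_le_div_sq_of_mul_sq_le_mul hρ (Real.sqrt_nonneg _) (by rwa [hx])

end DotProduct

namespace Matrix

variable {n : Type*} [Fintype n]

/-- The eigenvalue bound says `ρ • 1 ≤ A` in the Loewner order, by the functional calculus. -/
lemma IsHermitian.mul_dotProduct_self_le [DecidableEq n] {A : Matrix n n ℝ} (hA : A.IsHermitian)
    {ρ : ℝ} (hρ : ∀ i, ρ ≤ hA.eigenvalues i) (x : n → ℝ) : ρ * (x ⬝ᵥ x) ≤ x ⬝ᵥ A *ᵥ x := by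
  open MatrixOrder in
  have hle : algebraMap ℝ (Matrix n n ℝ) ρ ≤ A := by
    refine algebraMap_le_of_le_spectrum ?_ hA.isSelfAdjoint
    rw [hA.spectrum_real_eq_range_eigenvalues]
    rintro _ ⟨i, rfl⟩
    exact hρ i
  simpa [sub_mulVec, Algebra.algebraMap_eq_smul_one, smul_mulVec, dotProduct_smul] using
    (le_iff.mp hle).dotProduct_mulVec_nonneg x

lemma IsSymm.dotProduct_mulVec_comm {A : Matrix n n ℝ} (hA : A.IsSymm) (x y : n → ℝ) :
    x ⬝ᵥ A *ᵥ y = y ⬝ᵥ A *ᵥ x := by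
  rw [dotProduct_mulVec, ← mulVec_transpose, hA.eq, dotProduct_comm]

lemma IsSymm.sub_dotProduct_mulVec_sub {A : Matrix n n ℝ} (hA : A.IsSymm) {b v : n → ℝ}
    (hb : A *ᵥ b = v) (x : n → ℝ) :
    (x - b) ⬝ᵥ A *ᵥ (x - b) = (x ⬝ᵥ A *ᵥ x - 2 * (x ⬝ᵥ v)) - (b ⬝ᵥ A *ᵥ b - 2 * (b ⬝ᵥ v)) := by
  rw [← hb, mulVec_sub, dotProduct_sub, sub_dotProduct, sub_dotProduct,
    hA.dotProduct_mulVec_comm b x]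
  ring

end Matrix

section GroupBridge

variable {ι σ : Type*} [Fintype ι] [DecidableEq σ] (gr : ι → σ)

def groupL1 (x : ι → ℝ) (g : σ) : ℝ := ∑ i ∈ Finset.univ.filter (fun i => gr i = g), |x i|

noncomputable def groupBridge [Fintype σ] (c : σ → ℝ) (ν : ℝ) (x : ι → ℝ) : ℝ :=
  ∑ g, c g * groupL1 gr x g ^ ν

lemma groupL1_nonneg (x : ι → ℝ) (g : σ) : 0 ≤ groupL1 gr x g :=
  Finset.sum_nonneg fun i _ => abs_nonneg (x i)

lemma groupL1_pos {x : ι → ℝ} {g : σ} (h : ∃ i, gr i = g ∧ x i ≠ 0) : 0 < groupL1 gr x g := by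
  obtain ⟨i, hi, hx⟩ := h
  exact Finset.sum_pos' (fun i _ => abs_nonneg (x i))
    ⟨i, Finset.mem_filter.mpr ⟨Finset.mem_univ i, hi⟩, abs_pos.mpr hx⟩

lemma abs_groupL1_sub_groupL1_le (x y : ι → ℝ) (g : σ) :
    |groupL1 gr x g - groupL1 gr y g| ≤ groupL1 gr (x - y) g := by
  rw [groupL1, groupL1, groupL1, ← Finset.sum_sub_distrib]
  exact (Finset.abs_sum_le_sum_abs _ _).trans
    (Finset.sum_le_sum fun i _ => abs_abs_sub_abs_le_abs_sub (x i) (y i))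

lemma groupL1_le_sqrt_card_mul_sqrt (x : ι → ℝ) (g : σ) :
    groupL1 gr x g ≤ √(Finset.univ.filter (fun i => gr i = g)).card *
      √(∑ i ∈ Finset.univ.filter (fun i => gr i = g), x i ^ 2) := by
  rw [← Real.sqrt_mul (Nat.cast_nonneg _)]
  refine Real.le_sqrt_of_sq_le ?_
  unfold groupL1
  simpa only [sq_abs] using sq_sum_le_card_mul_sum_sq (f := fun i => |x i|)

lemma sum_sum_filter_sq_eq_dotProduct_self [Fintype σ] (x : ι → ℝ) :
    ∑ g, ∑ i ∈ Finset.univ.filter (fun i => gr i = g), x i ^ 2 = x ⬝ᵥ x := by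
  rw [Finset.sum_fiberwise, dotProduct_self_eq_sum_sq]

lemma groupBridge_sub_groupBridge_le [Fintype σ] {c : σ → ℝ} (hc : ∀ g, 0 ≤ c g) {ν : ℝ}
    (hν₀ : 0 ≤ ν) (hν₁ : ν ≤ 1) {b : ι → ℝ} (hb : ∀ g, 0 < groupL1 gr b g) (a : ι → ℝ) :
    groupBridge gr c ν b - groupBridge gr c ν a ≤
      √(∑ g, ((Finset.univ.filter (fun i => gr i = g)).card : ℝ) * c g ^ 2 *
        groupL1 gr b g ^ (2 * (ν - 1))) * √((b - a) ⬝ᵥ (b - a)) := by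
  set d : σ → ℝ := fun g => ((Finset.univ.filter (fun i => gr i = g)).card : ℝ)
  set w : σ → ℝ := fun g => c g * groupL1 gr b g ^ (ν - 1) * √(d g)
  set D : σ → ℝ := fun g => √(∑ i ∈ Finset.univ.filter (fun i => gr i = g), (b - a) i ^ 2)
  have hgroup : ∀ g, c g * groupL1 gr b g ^ ν - c g * groupL1 gr a g ^ ν ≤ w g * D g := by
    intro g
    calc c g * groupL1 gr b g ^ ν - c g * groupL1 gr a g ^ ν
        = c g * (groupL1 gr b g ^ ν - groupL1 gr a g ^ ν) := by ring
      _ ≤ c g * (groupL1 gr b g ^ (ν - 1) * |groupL1 gr b g - groupL1 gr a g|) :=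
          mul_le_mul_of_nonneg_left (Real.rpow_sub_rpow_le_rpow_sub_one_mul_abs
            (groupL1_nonneg gr a g) (hb g) hν₀ hν₁) (hc g)
      _ ≤ c g * (groupL1 gr b g ^ (ν - 1) * (√(d g) * D g)) :=
          mul_le_mul_of_nonneg_left (mul_le_mul_of_nonneg_left
            ((abs_groupL1_sub_groupL1_le gr b a g).trans
              (groupL1_le_sqrt_card_mul_sqrt gr (b - a) g))
            (Real.rpow_nonneg (hb g).le _)) (hc g)
      _ = w g * D g := by ring
  have hw : ∀ g, w g ^ 2 = d g * c g ^ 2 * groupL1 gr b g ^ (2 * (ν - 1)) := by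
    intro g
    rw [mul_comm 2, Real.rpow_mul (hb g).le, Real.rpow_two]
    simp only [w, mul_pow, Real.sq_sqrt (show 0 ≤ d g from Nat.cast_nonneg _)]
    ring
  have hD : ∑ g, D g ^ 2 = (b - a) ⬝ᵥ (b - a) := by
    simp only [D, Real.sq_sqrt (Finset.sum_nonneg fun i _ => sq_nonneg ((b - a) i))]
    exact sum_sum_filter_sq_eq_dotProduct_self gr (b - a)
  calc groupBridge gr c ν b - groupBridge gr c ν a ≤ ∑ g, w g * D g := by
        rw [groupBridge, groupBridge, ← Finset.sum_sub_distrib]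
        exact Finset.sum_le_sum fun g _ => hgroup g
    _ ≤ √(∑ g, w g ^ 2) * √(∑ g, D g ^ 2) := Real.sum_mul_le_sqrt_mul_sqrt _ w D
    _ = _ := by simp only [hw, hD, d]

end GroupBridge

section Ridge

variable {m n : Type*} [Fintype m] [Fintype n] (Ψ : Matrix m n ℝ) (R : Matrix n n ℝ) (lam₂ : ℝ)

lemma ridge_loss_eq (y : m → ℝ) (γ : n → ℝ) :
    (y - Ψ *ᵥ γ) ⬝ᵥ (y - Ψ *ᵥ γ) + lam₂ * (γ ⬝ᵥ R *ᵥ γ) =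
      γ ⬝ᵥ (Ψᵀ * Ψ + lam₂ • R) *ᵥ γ - 2 * (γ ⬝ᵥ Ψᵀ *ᵥ y) + y ⬝ᵥ y := by
  have hquad : γ ⬝ᵥ (Ψᵀ * Ψ + lam₂ • R) *ᵥ γ =
      (Ψ *ᵥ γ) ⬝ᵥ (Ψ *ᵥ γ) + lam₂ * (γ ⬝ᵥ R *ᵥ γ) := by
    rw [add_mulVec, dotProduct_add, smul_mulVec, dotProduct_smul, smul_eq_mul, ← mulVec_mulVec,
      dotProduct_mulVec, vecMul_transpose]
  have hlin : γ ⬝ᵥ Ψᵀ *ᵥ y = y ⬝ᵥ Ψ *ᵥ γ := by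
    rw [dotProduct_mulVec, vecMul_transpose, dotProduct_comm]
  rw [hquad, hlin, sub_dotProduct, dotProduct_sub, dotProduct_sub, dotProduct_comm (Ψ *ᵥ γ) y]
  ring

variable {Ψ R lam₂}

lemma sub_dotProduct_ridge_mulVec_sub_le (hM : (Ψᵀ * Ψ + lam₂ • R).IsSymm) {y : m → ℝ}
    {b γ : n → ℝ} (hb : (Ψᵀ * Ψ + lam₂ • R) *ᵥ b = Ψᵀ *ᵥ y) {lam₁ p q : ℝ}
    (h : (y - Ψ *ᵥ γ) ⬝ᵥ (y - Ψ *ᵥ γ) + lam₁ * p + lam₂ * (γ ⬝ᵥ R *ᵥ γ) ≤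
      (y - Ψ *ᵥ b) ⬝ᵥ (y - Ψ *ᵥ b) + lam₁ * q + lam₂ * (b ⬝ᵥ R *ᵥ b)) :
    (γ - b) ⬝ᵥ (Ψᵀ * Ψ + lam₂ • R) *ᵥ (γ - b) ≤ lam₁ * (q - p) := by
  have hγ := ridge_loss_eq Ψ R lam₂ y γ
  have hb' := ridge_loss_eq Ψ R lam₂ y b
  rw [hM.sub_dotProduct_mulVec_sub hb]
  linarith

lemma sub_dotProduct_self_sub_le_of_groupBridge {σ : Type*} [Fintype σ] [DecidableEq σ]
    (gr : n → σ) {c : σ → ℝ} (hc : ∀ g, 0 ≤ c g) {ν : ℝ} (hν₀ : 0 ≤ ν) (hν₁ : ν ≤ 1)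
    {lam₁ : ℝ} (hlam₁ : 0 ≤ lam₁) (hM : (Ψᵀ * Ψ + lam₂ • R).IsSymm) {ρ : ℝ} (hρ : 0 < ρ)
    (hquad : ∀ x, ρ * (x ⬝ᵥ x) ≤ x ⬝ᵥ (Ψᵀ * Ψ + lam₂ • R) *ᵥ x) {y : m → ℝ} {b γ : n → ℝ}
    (hb : (Ψᵀ * Ψ + lam₂ • R) *ᵥ b = Ψᵀ *ᵥ y)
    (hmin : (y - Ψ *ᵥ γ) ⬝ᵥ (y - Ψ *ᵥ γ) + lam₁ * groupBridge gr c ν γ + lam₂ * (γ ⬝ᵥ R *ᵥ γ) ≤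
      (y - Ψ *ᵥ b) ⬝ᵥ (y - Ψ *ᵥ b) + lam₁ * groupBridge gr c ν b + lam₂ * (b ⬝ᵥ R *ᵥ b))
    {η : ℝ} (hη : √(∑ g, ((Finset.univ.filter (fun i => gr i = g)).card : ℝ) * c g ^ 2 *
        groupL1 gr b g ^ (2 * (ν - 1))) ≤ η)
    (hbg : ∀ g, 0 < groupL1 gr b g) :
    (γ - b) ⬝ᵥ (γ - b) ≤ lam₁ ^ 2 * η ^ 2 / ρ ^ 2 := by
  have hsymm : (b - γ) ⬝ᵥ (b - γ) = (γ - b) ⬝ᵥ (γ - b) := by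
    rw [← neg_sub γ b, neg_dotProduct_neg]
  rw [← mul_pow]
  refine dotProduct_self_le_div_sq_of_mul_le hρ ?_
  calc ρ * ((γ - b) ⬝ᵥ (γ - b)) ≤ (γ - b) ⬝ᵥ (Ψᵀ * Ψ + lam₂ • R) *ᵥ (γ - b) := hquad _
    _ ≤ lam₁ * (groupBridge gr c ν b - groupBridge gr c ν γ) :=
        sub_dotProduct_ridge_mulVec_sub_le hM hb hmin
    _ ≤ lam₁ * (η * √((γ - b) ⬝ᵥ (γ - b))) := by
        gcongr
        rw [← hsymm]
        exact (groupBridge_sub_groupBridge_le gr hc hν₀ hν₁ hbg γ).trans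
          (mul_le_mul_of_nonneg_right hη (Real.sqrt_nonneg _))
    _ = lam₁ * η * √((γ - b) ⬝ᵥ (γ - b)) := by ring

lemma sub_dotProduct_self_sub_ridge_le {ρ : ℝ} (hρ : 0 < ρ)
    (hquad : ∀ x, ρ * (x ⬝ᵥ x) ≤ x ⬝ᵥ (Ψᵀ * Ψ + lam₂ • R) *ᵥ x) {γstar : n → ℝ} {e : m → ℝ}
    {b : n → ℝ} (hb : (Ψᵀ * Ψ + lam₂ • R) *ᵥ b = Ψᵀ *ᵥ (Ψ *ᵥ γstar + e)) :
    (b - γstar) ⬝ᵥ (b - γstar) ≤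
      (2 * ((Ψᵀ *ᵥ e) ⬝ᵥ (Ψᵀ *ᵥ e)) + 2 * lam₂ ^ 2 * ((R *ᵥ γstar) ⬝ᵥ (R *ᵥ γstar))) /
        ρ ^ 2 := by
  set w := Ψᵀ *ᵥ e + -(lam₂ • R *ᵥ γstar)
  have hw : (Ψᵀ * Ψ + lam₂ • R) *ᵥ (b - γstar) = w := by
    rw [mulVec_sub, hb, mulVec_add, add_mulVec, mulVec_mulVec, smul_mulVec]
    simp only [w]
    abel
  have hbound : (b - γstar) ⬝ᵥ (b - γstar) ≤ (w ⬝ᵥ w) / ρ ^ 2 := by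
    rw [← Real.sq_sqrt (dotProduct_self_nonneg w)]
    refine dotProduct_self_le_div_sq_of_mul_le hρ ((hquad _).trans ?_)
    rw [hw, mul_comm (√(w ⬝ᵥ w))]
    exact dotProduct_le_sqrt_mul_sqrt _ w
  refine hbound.trans (div_le_div_of_nonneg_right ?_ (sq_nonneg ρ))
  calc w ⬝ᵥ w ≤ 2 * ((Ψᵀ *ᵥ e) ⬝ᵥ (Ψᵀ *ᵥ e)) +
        2 * ((lam₂ • R *ᵥ γstar) ⬝ᵥ (lam₂ • R *ᵥ γstar)) := by
        simpa only [neg_dotProduct_neg] using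
          add_dotProduct_self_add_le (Ψᵀ *ᵥ e) (-(lam₂ • R *ᵥ γstar))
    _ = _ := by rw [smul_dotProduct, dotProduct_smul, smul_eq_mul, smul_eq_mul]; ring

lemma groupBridge_error_le {σ : Type*} [Fintype σ] [DecidableEq σ]
    (gr : n → σ) {c : σ → ℝ} (hc : ∀ g, 0 ≤ c g) {ν : ℝ} (hν₀ : 0 ≤ ν) (hν₁ : ν ≤ 1)
    {lam₁ : ℝ} (hlam₁ : 0 ≤ lam₁) (hM : (Ψᵀ * Ψ + lam₂ • R).IsSymm) {ρ : ℝ} (hρ : 0 < ρ)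
    (hquad : ∀ x, ρ * (x ⬝ᵥ x) ≤ x ⬝ᵥ (Ψᵀ * Ψ + lam₂ • R) *ᵥ x) {γstar : n → ℝ} {e : m → ℝ}
    {b γ : n → ℝ} (hb : (Ψᵀ * Ψ + lam₂ • R) *ᵥ b = Ψᵀ *ᵥ (Ψ *ᵥ γstar + e))
    (hmin : (Ψ *ᵥ γstar + e - Ψ *ᵥ γ) ⬝ᵥ (Ψ *ᵥ γstar + e - Ψ *ᵥ γ) +
        lam₁ * groupBridge gr c ν γ + lam₂ * (γ ⬝ᵥ R *ᵥ γ) ≤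
      (Ψ *ᵥ γstar + e - Ψ *ᵥ b) ⬝ᵥ (Ψ *ᵥ γstar + e - Ψ *ᵥ b) +
        lam₁ * groupBridge gr c ν b + lam₂ * (b ⬝ᵥ R *ᵥ b))
    {η : ℝ} (hη : √(∑ g, ((Finset.univ.filter (fun i => gr i = g)).card : ℝ) * c g ^ 2 *
        groupL1 gr b g ^ (2 * (ν - 1))) ≤ η)
    (hbg : ∀ g, 0 < groupL1 gr b g) :
    (γ - γstar) ⬝ᵥ (γ - γstar) ≤
      (2 * lam₁ ^ 2 * η ^ 2 + 4 * lam₂ ^ 2 * ((R *ᵥ γstar) ⬝ᵥ (R *ᵥ γstar)) +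
        4 * ((Ψᵀ *ᵥ e) ⬝ᵥ (Ψᵀ *ᵥ e))) / ρ ^ 2 := by
  have hpenalized :=
    sub_dotProduct_self_sub_le_of_groupBridge gr hc hν₀ hν₁ hlam₁ hM hρ hquad hb hmin hη hbg
  have hridge := sub_dotProduct_self_sub_ridge_le hρ hquad hb
  calc (γ - γstar) ⬝ᵥ (γ - γstar) = ((γ - b) + (b - γstar)) ⬝ᵥ ((γ - b) + (b - γstar)) := by
        rw [sub_add_sub_cancel]
    _ ≤ 2 * ((γ - b) ⬝ᵥ (γ - b)) + 2 * ((b - γstar) ⬝ᵥ (b - γstar)) :=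
        add_dotProduct_self_add_le _ _
    _ ≤ 2 * (lam₁ ^ 2 * η ^ 2 / ρ ^ 2) + 2 * ((2 * ((Ψᵀ *ᵥ e) ⬝ᵥ (Ψᵀ *ᵥ e)) +
          2 * lam₂ ^ 2 * ((R *ᵥ γstar) ⬝ᵥ (R *ᵥ γstar))) / ρ ^ 2) := by
        gcongr
    _ = _ := by ring

end Ridge

section Noise

variable {Ω ι : Type*} [MeasurableSpace Ω] {P : Measure Ω} [Fintype ι] {ε : ι → Ω → ℝ} {σ : ℝ}

lemma integral_sq_sum_mul_of_iIndepFun [IsFiniteMeasure P] (hindep : iIndepFun ε P)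
    (hL2 : ∀ i, MemLp (ε i) 2 P) (hmean : ∀ i, ∫ ω, ε i ω ∂P = 0)
    (hvar : ∀ i, ∫ ω, ε i ω ^ 2 ∂P = σ ^ 2) (a : ι → ℝ) :
    ∫ ω, (∑ i, a i * ε i ω) ^ 2 ∂P = σ ^ 2 * ∑ i, a i ^ 2 := by
  have hX : ∀ i, MemLp (fun ω => a i * ε i ω) 2 P := fun i => (hL2 i).const_mul (a i)
  have hsum : MemLp (fun ω => ∑ i, a i * ε i ω) 2 P := memLp_finsetSum _ fun i _ => hX i
  have hsum_mean : ∫ ω, ∑ i, a i * ε i ω ∂P = 0 := by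
    rw [integral_finsetSum _ fun i _ => (hX i).integrable one_le_two]
    simp [integral_const_mul, hmean]
  calc ∫ ω, (∑ i, a i * ε i ω) ^ 2 ∂P = Var[fun ω => ∑ i, a i * ε i ω; P] :=
        (variance_of_integral_eq_zero hsum.aemeasurable hsum_mean).symm
    _ = ∑ i, Var[fun ω => a i * ε i ω; P] := by
        rw [← IndepFun.variance_sum (fun i _ => hX i)]
        · congr 1; ext ω; simp
        · exact fun i _ j _ hij =>
            (hindep.indepFun hij).comp (measurable_const_mul (a i)) (measurable_const_mul (a j))
    _ = σ ^ 2 * ∑ i, a i ^ 2 := by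
        rw [Finset.mul_sum]
        refine Finset.sum_congr rfl fun i _ => ?_
        rw [variance_const_mul, variance_of_integral_eq_zero (hL2 i).aemeasurable (hmean i), hvar,
          mul_comm]

variable {k : Type*}

lemma memLp_mulVec_apply (hL2 : ∀ i, MemLp (ε i) 2 P) (A : Matrix k ι ℝ) (j : k) :
    MemLp (fun ω => (A *ᵥ fun i => ε i ω) j) 2 P :=
  memLp_finsetSum _ fun i _ => (hL2 i).const_mul (A j i)

lemma integrable_mulVec_dotProduct_self [Fintype k] (hL2 : ∀ i, MemLp (ε i) 2 P)
    (A : Matrix k ι ℝ) :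
    Integrable (fun ω => (A *ᵥ fun i => ε i ω) ⬝ᵥ (A *ᵥ fun i => ε i ω)) P := by
  simp only [dotProduct_self_eq_sum_sq]
  exact integrable_finsetSum _ fun j _ => (memLp_mulVec_apply hL2 A j).integrable_sq

lemma integral_mulVec_dotProduct_self [IsFiniteMeasure P] [Fintype k] (hindep : iIndepFun ε P)
    (hL2 : ∀ i, MemLp (ε i) 2 P) (hmean : ∀ i, ∫ ω, ε i ω ∂P = 0)
    (hvar : ∀ i, ∫ ω, ε i ω ^ 2 ∂P = σ ^ 2)
    (A : Matrix k ι ℝ) :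
    ∫ ω, (A *ᵥ fun i => ε i ω) ⬝ᵥ (A *ᵥ fun i => ε i ω) ∂P = σ ^ 2 * ∑ j, ∑ i, A j i ^ 2 := by
  simp only [dotProduct_self_eq_sum_sq]
  rw [integral_finsetSum _ fun j _ => (memLp_mulVec_apply hL2 A j).integrable_sq, Finset.mul_sum]
  exact Finset.sum_congr rfl fun j _ =>
    integral_sq_sum_mul_of_iIndepFun hindep hL2 hmean hvar (A j)

end Noise

theorem group_bridge_consistency_general
    {Ω : Type*} [MeasurableSpace Ω] (P : Measure Ω) [IsProbabilityMeasure P]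
    {N K S : ℕ} (Ψ : Matrix (Fin N) (Fin K) ℝ)
    (gr : Fin K → Fin S) (c : Fin S → ℝ) (hc : ∀ g, 0 < c g)
    (ν : ℝ) (hν : ν ∈ Set.Ioo (0 : ℝ) 1)
    (lam₁ : ℝ) (hlam₁ : 0 ≤ lam₁) (lam₂ : ℝ)
    (R : Matrix (Fin K) (Fin K) ℝ)
    (hM : (Ψᵀ * Ψ + lam₂ • R).IsHermitian)
    (ρmin : ℝ) (hρ : IsLeast (Set.range hM.eigenvalues) ρmin) (hρpos : 0 < ρmin)
    (γstar : Fin K → ℝ) (σ η : ℝ) (ε : Fin N → Ω → ℝ)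
    (hindep : iIndepFun ε P)
    (hL2 : ∀ i, MemLp (ε i) 2 P)
    (hmean : ∀ i, ∫ ω, ε i ω ∂P = 0)
    (hvar : ∀ i, ∫ ω, (ε i ω) ^ 2 ∂P = σ ^ 2)
    (y : Ω → Fin N → ℝ) (hy : ∀ ω, y ω = Ψ.mulVec γstar + fun i => ε i ω)
    (L : (Fin N → ℝ) → (Fin K → ℝ) → ℝ)
    (hL : ∀ z γ, L z γ = (z - Ψ.mulVec γ) ⬝ᵥ (z - Ψ.mulVec γ) +
      lam₁ * ∑ g, c g * (∑ i ∈ Finset.univ.filter (fun i => gr i = g), |γ i|) ^ ν +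
      lam₂ * (γ ⬝ᵥ R.mulVec γ))
    (γhat : Ω → Fin K → ℝ)
    (hmin : ∀ᵐ ω ∂P, ∀ γ, L (y ω) (γhat ω) ≤ L (y ω) γ)
    (b : Ω → Fin K → ℝ)
    (hb : ∀ ω, b ω = ((Ψᵀ * Ψ + lam₂ • R)⁻¹).mulVec (Ψᵀ.mulVec (y ω)))
    (hη : ∀ᵐ ω ∂P,
      Real.sqrt (∑ g, ((Finset.univ.filter (fun i => gr i = g)).card : ℝ) * (c g) ^ 2 *
        (∑ i ∈ Finset.univ.filter (fun i => gr i = g), |b ω i|) ^ (2 * (ν - 1))) ≤ η ∧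
      ∀ g, ∃ i, gr i = g ∧ b ω i ≠ 0) :
    ∫ ω, (γhat ω - γstar) ⬝ᵥ (γhat ω - γstar) ∂P ≤
      (8 * lam₁ ^ 2 * η ^ 2 + 4 * lam₂ ^ 2 * (R.mulVec γstar ⬝ᵥ R.mulVec γstar) +
        4 * σ ^ 2 * ∑ i, ∑ j, (Ψ i j) ^ 2) / ρmin ^ 2 := by
  obtain ⟨hν₀, hν₁⟩ := hν
  have heig : ∀ i, ρmin ≤ hM.eigenvalues i := fun i => hρ.2 ⟨i, rfl⟩
  have hdet : IsUnit (Ψᵀ * Ψ + lam₂ • R).det :=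
    (hM.posDef_iff_eigenvalues_pos.mpr fun i => hρpos.trans_le (heig i)).det_pos.ne'.isUnit
  have hridge (ω : Ω) :
      (Ψᵀ * Ψ + lam₂ • R) *ᵥ b ω = Ψᵀ *ᵥ (Ψ *ᵥ γstar + fun i => ε i ω) := by
    rw [hb ω, hy ω, mulVec_mulVec, mul_nonsing_inv _ hdet, one_mulVec]
  have hpointwise : ∀ᵐ ω ∂P, (γhat ω - γstar) ⬝ᵥ (γhat ω - γstar) ≤
      (2 * lam₁ ^ 2 * η ^ 2 + 4 * lam₂ ^ 2 * ((R *ᵥ γstar) ⬝ᵥ (R *ᵥ γstar)) +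
        4 * ((Ψᵀ *ᵥ fun i => ε i ω) ⬝ᵥ (Ψᵀ *ᵥ fun i => ε i ω))) / ρmin ^ 2 := by
    filter_upwards [hmin, hη] with ω hminω ⟨hηω, hbω⟩
    have hbeats := hminω (b ω)
    rw [hL, hL, hy ω] at hbeats
    exact groupBridge_error_le gr (fun g => (hc g).le) hν₀.le hν₁.le hlam₁
      (isHermitian_iff_isSymm.mp hM) hρpos (hM.mul_dotProduct_self_le heig) (hridge ω) hbeats hηω
      fun g => groupL1_pos gr (hbω g)
  calc ∫ ω, (γhat ω - γstar) ⬝ᵥ (γhat ω - γstar) ∂P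
      ≤ ∫ ω, (2 * lam₁ ^ 2 * η ^ 2 + 4 * lam₂ ^ 2 * ((R *ᵥ γstar) ⬝ᵥ (R *ᵥ γstar)) +
          4 * ((Ψᵀ *ᵥ fun i => ε i ω) ⬝ᵥ (Ψᵀ *ᵥ fun i => ε i ω))) / ρmin ^ 2 ∂P :=
        integral_mono_of_nonneg (ae_of_all _ fun ω => dotProduct_self_nonneg _)
          (((integrable_const _).add
            ((integrable_mulVec_dotProduct_self hL2 Ψᵀ).const_mul 4)).div_const _) hpointwise
    _ = (2 * lam₁ ^ 2 * η ^ 2 + 4 * lam₂ ^ 2 * ((R *ᵥ γstar) ⬝ᵥ (R *ᵥ γstar)) +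
          4 * σ ^ 2 * ∑ i, ∑ j, Ψ i j ^ 2) / ρmin ^ 2 := by
        rw [integral_div, integral_add (integrable_const _)
          ((integrable_mulVec_dotProduct_self hL2 Ψᵀ).const_mul 4), integral_const,
          integral_const_mul, integral_mulVec_dotProduct_self hindep hL2 hmean hvar,
          Finset.sum_comm]
        simp only [transpose_apply, probReal_univ, one_smul, mul_assoc]
    _ ≤ _ := by
        gcongr
        nlinarith [sq_nonneg (lam₁ * η)]

/-- Theorem 1 of the paper (consistency of the group bridge penalized estimator), in
finite-dimensional matrix form.  With `M = ΨᵀΨ + λ₂R` having smallest eigenvalue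
`ρ_min > 0`, data `y = Ψγ* + ε` with independent square-integrable mean-zero noise of
variance `σ²`, a measurable `γ̂` that a.s. minimizes
`L_y(γ) = ‖y − Ψγ‖₂² + λ₁ ∑ g c_g ‖γ_g‖₁^ν + λ₂ γᵀRγ`, and a constant `η` with
`(∑ g d_g c_g² ‖b_g‖₁^{2(ν−1)})^{1/2} ≤ η` and all blocks of the ridge estimator `b`
nonzero a.s., one has
`E‖γ̂ − γ*‖₂² ≤ (8λ₁²η² + 4λ₂²‖Rγ*‖₂² + 4σ²‖Ψ‖_F²)/ρ_min²`. -/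
theorem group_bridge_consistency
    {Ω : Type*} [MeasurableSpace Ω] (P : Measure Ω) [IsProbabilityMeasure P]
    {N K S : ℕ} (Ψ : Matrix (Fin N) (Fin K) ℝ)
    (gr : Fin K → Fin S) (c : Fin S → ℝ) (hc : ∀ g, 0 < c g)
    (ν : ℝ) (hν : ν ∈ Set.Ioo (0 : ℝ) 1)
    (lam₁ : ℝ) (hlam₁ : 0 ≤ lam₁) (lam₂ : ℝ) (hlam₂ : 0 ≤ lam₂)
    (R : Matrix (Fin K) (Fin K) ℝ) (hR : R.PosSemidef)
    (hM : (Ψᵀ * Ψ + lam₂ • R).IsHermitian)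
    (ρmin : ℝ) (hρ : IsLeast (Set.range hM.eigenvalues) ρmin) (hρpos : 0 < ρmin)
    (γstar : Fin K → ℝ) (σ η : ℝ) (ε : Fin N → Ω → ℝ)
    (hmeas : ∀ i, Measurable (ε i))
    (hindep : iIndepFun ε P)
    (hL2 : ∀ i, MemLp (ε i) 2 P)
    (hmean : ∀ i, ∫ ω, ε i ω ∂P = 0)
    (hvar : ∀ i, ∫ ω, (ε i ω) ^ 2 ∂P = σ ^ 2)
    (y : Ω → Fin N → ℝ) (hy : ∀ ω, y ω = Ψ.mulVec γstar + fun i => ε i ω)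
    (L : (Fin N → ℝ) → (Fin K → ℝ) → ℝ)
    (hL : ∀ z γ, L z γ = (z - Ψ.mulVec γ) ⬝ᵥ (z - Ψ.mulVec γ) +
      lam₁ * ∑ g, c g * (∑ i ∈ Finset.univ.filter (fun i => gr i = g), |γ i|) ^ ν +
      lam₂ * (γ ⬝ᵥ R.mulVec γ))
    (γhat : Ω → Fin K → ℝ) (hγhat_meas : Measurable γhat)
    (hmin : ∀ᵐ ω ∂P, ∀ γ, L (y ω) (γhat ω) ≤ L (y ω) γ)
    (b : Ω → Fin K → ℝ)
    (hb : ∀ ω, b ω = ((Ψᵀ * Ψ + lam₂ • R)⁻¹).mulVec (Ψᵀ.mulVec (y ω)))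
    (hη : ∀ᵐ ω ∂P,
      Real.sqrt (∑ g, ((Finset.univ.filter (fun i => gr i = g)).card : ℝ) * (c g) ^ 2 *
        (∑ i ∈ Finset.univ.filter (fun i => gr i = g), |b ω i|) ^ (2 * (ν - 1))) ≤ η ∧
      ∀ g, ∃ i, gr i = g ∧ b ω i ≠ 0) :
    ∫ ω, (γhat ω - γstar) ⬝ᵥ (γhat ω - γstar) ∂P ≤
      (8 * lam₁ ^ 2 * η ^ 2 + 4 * lam₂ ^ 2 * (R.mulVec γstar ⬝ᵥ R.mulVec γstar) +
        4 * σ ^ 2 * ∑ i, ∑ j, (Ψ i j) ^ 2) / ρmin ^ 2 :=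
  group_bridge_consistency_general P Ψ gr c hc ν hν lam₁ hlam₁ lam₂ R hM ρmin hρ hρpos γstar σ η ε
    hindep hL2 hmean hvar y hy L hL γhat hmin b hb hη
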